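/- arXiv:math/0610360 — 5 statements merged into one kernel-verified Lean document; each statement's English description precedes it below -/
import Mathlib

section
/- For every set S of primes with ∑_{p∈S} 1/p = ∞, there exists a nonnegative multiplicative function f such that ρ(p) = sup_{ν≥0} f(p^ν) = ∞ for all p ∈ S, ρ(p) = 1 + 1/p for p ∉ S, yet limsup_{n→∞} f(n)/log log n = 0. -/
open Filter Real
open scoped ENNReal

namespace TWcounter

/-- A rapidly growing tower. -/
def B (m : ℕ) : ℕ := 2 ^ (2 ^ (4 ^ m))

lemma B_pos (m : ℕ) : 0 < B m := Nat.pow_pos (by norm_num)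

lemma le_B (m : ℕ) : m ≤ B m := by
  have h1 : m ≤ 4 ^ m := (Nat.lt_pow_self (n := m) (a := 4) (by norm_num)).le
  have h2 : 4 ^ m ≤ 2 ^ (4 ^ m) := (Nat.lt_two_pow_self (n := 4 ^ m)).le
  have h3 : 2 ^ (4 ^ m) ≤ 2 ^ (2 ^ (4 ^ m)) :=
    Nat.pow_le_pow_right (by norm_num) (Nat.lt_two_pow_self (n := 4 ^ m)).le
  exact h1.trans (h2.trans h3)

/-- The "level" of the exponent ν at prime p. -/
def lev (p ν : ℕ) : ℕ := Nat.findGreatest (fun j => B (p + j) ≤ ν) ν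

lemma le_lev {p j ν : ℕ} (h : B (p + j) ≤ ν) : j ≤ lev p ν :=
  Nat.le_findGreatest (((Nat.le_add_left j p).trans (le_B (p + j))).trans h) h

lemma lev_spec {p ν : ℕ} (h : 1 ≤ lev p ν) : B (p + lev p ν) ≤ ν := by
  obtain ⟨j, _, hjν, hj⟩ :=
    Nat.findGreatest_pos (P := fun j => B (p + j) ≤ ν) (k := ν) |>.mp h
  exact Nat.findGreatest_spec (P := fun j => B (p + j) ≤ ν) hjν hj

open Classical in
/-- The values on prime powers. -/
noncomputable def g (S : Set ℕ) (p ν : ℕ) : ℝ :=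
  if p ∈ S then (lev p ν : ℝ) else if 1 ≤ lev p ν then 1 + 1 / (p : ℝ) else 1

lemma g_mem (S : Set ℕ) {p : ℕ} (hp : p ∈ S) (ν : ℕ) : g S p ν = (lev p ν : ℝ) := by
  unfold g; rw [if_pos hp]

lemma g_not_mem_pos (S : Set ℕ) {p : ℕ} (hp : p ∉ S) {ν : ℕ} (h : 1 ≤ lev p ν) :
    g S p ν = 1 + 1 / (p : ℝ) := by
  unfold g; rw [if_neg hp, if_pos h]

lemma g_not_mem_le (S : Set ℕ) {p : ℕ} (hp : p ∉ S) (ν : ℕ) :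
    g S p ν ≤ 1 + 1 / (p : ℝ) := by
  have h1p : 0 ≤ 1 / (p : ℝ) := by positivity
  unfold g; rw [if_neg hp]
  split_ifs with h
  · exact le_rfl
  · linarith

lemma g_nonneg (S : Set ℕ) (p ν : ℕ) : 0 ≤ g S p ν := by
  unfold g; split_ifs <;> positivity

lemma g_le (S : Set ℕ) (p ν : ℕ) (hp : 1 ≤ p) : g S p ν ≤ 2 ^ lev p ν := by
  unfold g
  split_ifs with h h1
  · exact_mod_cast (Nat.lt_two_pow_self (n := lev p ν)).le
  · have hp' : 1 / (p : ℝ) ≤ 1 := by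
      rw [div_le_one (by exact_mod_cast hp)]; exact_mod_cast hp
    have h2 : (2:ℝ) ^ 1 ≤ 2 ^ lev p ν := pow_le_pow_right₀ (by norm_num) h1
    rw [pow_one] at h2
    linarith
  · exact one_le_pow₀ (by norm_num)

/-- The multiplicative function. -/
noncomputable def f (S : Set ℕ) (n : ℕ) : ℝ := n.factorization.prod (g S)

lemma f_nonneg (S : Set ℕ) (n : ℕ) : 0 ≤ f S n := by
  unfold f; rw [Finsupp.prod]
  exact Finset.prod_nonneg fun p _ => g_nonneg S p _

lemma f_one (S : Set ℕ) : f S 1 = 1 := by simp [f]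

lemma f_mul (S : Set ℕ) (m n : ℕ) (h : Nat.Coprime m n) :
    f S (m * n) = f S m * f S n := by
  rcases eq_or_ne m 0 with rfl | hm
  · have : n = 1 := by simpa [Nat.coprime_zero_left] using h
    subst this; simp [f]
  rcases eq_or_ne n 0 with rfl | hn
  · have : m = 1 := by simpa [Nat.coprime_zero_right] using h
    subst this; simp [f]
  unfold f
  rw [Nat.factorization_mul hm hn, Finsupp.prod_add_index_of_disjoint]
  simpa [Nat.support_factorization] using h.disjoint_primeFactors

lemma f_prime_pow (S : Set ℕ) {p : ℕ} (hp : p.Prime) {ν : ℕ} (hν : ν ≠ 0) :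
    f S (p ^ ν) = g S p ν := by
  unfold f
  rw [Nat.Prime.factorization_pow hp, Finsupp.prod,
    Finsupp.support_single_ne_zero _ hν, Finset.prod_singleton, Finsupp.single_eq_same]

/-- the total level of n -/
def T (n : ℕ) : ℕ := ∑ p ∈ n.factorization.support, lev p (n.factorization p)

lemma f_le_pow_T (S : Set ℕ) (n : ℕ) : f S n ≤ 2 ^ T n := by
  unfold f T
  rw [Finsupp.prod, ← Finset.prod_pow_eq_pow_sum]
  refine Finset.prod_le_prod (fun p _ => g_nonneg S p _) (fun p hp => ?_)
  exact g_le S p _ (Nat.prime_of_mem_primeFactors (by simpa using hp)).one_lt.le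

lemma nat_aux : ∀ M : ℕ, 3 ≤ M → 2 * (M * M) ≤ 4 ^ M := by
  intro M hM
  induction M with
  | zero => omega
  | succ m ih =>
    rcases Nat.lt_or_ge m 3 with h | h
    · interval_cases m <;> norm_num
    · have h1 := ih h
      have h2 : 2 * ((m + 1) * (m + 1)) ≤ 2 * (2 * (m * m)) := by nlinarith
      calc 2 * ((m + 1) * (m + 1)) ≤ 2 * (2 * (m * m)) := h2
        _ ≤ 2 * 4 ^ m := by omega
        _ ≤ 4 ^ (m + 1) := by rw [pow_succ]; omega

lemma key (S : Set ℕ) {n : ℕ} (hn : n ≠ 0) (hT : 1 ≤ T n) :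
    (f S n) ^ 2 ≤ 2 * Real.log (Real.log n) := by
  classical
  set F := n.factorization with hF
  set C := F.support.filter (fun p => 1 ≤ lev p (F p)) with hCdef
  have hTC : ∑ p ∈ C, lev p (F p) = T n :=
    Finset.sum_filter_of_ne (fun p _ h => by omega)
  have hCne : C.Nonempty := by
    rw [Finset.nonempty_iff_ne_empty]
    intro h
    have : T n = 0 := by rw [← hTC, h, Finset.sum_empty]
    omega
  obtain ⟨p, hpC, hpM⟩ := Finset.exists_mem_eq_sup C hCne (fun q => q + lev q (F q))
  set M := p + lev p (F p) with hMdef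
  have hle : ∀ q ∈ C, q + lev q (F q) ≤ M := fun q hq => by
    have h := Finset.le_sup (f := fun q => q + lev q (F q)) hq
    rw [hpM] at h
    simpa using h
  have hpsupp : p ∈ F.support := (Finset.mem_filter.mp hpC).1
  have hplev : 1 ≤ lev p (F p) := (Finset.mem_filter.mp hpC).2
  have hpprime : p.Prime := by
    apply Nat.prime_of_mem_primeFactors
    rwa [← Nat.support_factorization]
  have hM3 : 3 ≤ M := by
    have := hpprime.two_le
    omega
  -- T n ≤ M * M
  have hTM : T n ≤ M * M := by
    rw [← hTC]
    have h1 : ∀ q ∈ C, lev q (F q) ≤ M := fun q hq => by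
      have := hle q hq; omega
    have hcard : C.card ≤ M := by
      have hsub : C ⊆ Finset.range M := fun q hq => by
        rw [Finset.mem_range]
        have h2 := hle q hq
        have h3 : 1 ≤ lev q (F q) := (Finset.mem_filter.mp hq).2
        omega
      simpa using Finset.card_le_card hsub
    calc ∑ q ∈ C, lev q (F q) ≤ ∑ _q ∈ C, M := Finset.sum_le_sum h1
      _ = C.card * M := by rw [Finset.sum_const, smul_eq_mul]
      _ ≤ M * M := Nat.mul_le_mul_right M hcard
  -- n is at least 2 ^ B M
  have hBM : B M ≤ F p := by rw [hMdef]; exact lev_spec hplev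
  have hdvd : p ^ (F p) ∣ n := Nat.ordProj_dvd n p
  have hnge : 2 ^ (B M) ≤ n :=
    calc 2 ^ (B M) ≤ 2 ^ (F p) := Nat.pow_le_pow_right (by norm_num) hBM
      _ ≤ p ^ (F p) := Nat.pow_le_pow_left hpprime.two_le _
      _ ≤ n := Nat.le_of_dvd (Nat.pos_of_ne_zero hn) hdvd
  -- real estimates
  have hlog2pos : (0:ℝ) < Real.log 2 := Real.log_pos (by norm_num)
  have hlogn : (B M : ℝ) * Real.log 2 ≤ Real.log n := by
    have h1 : ((2:ℝ) ^ (B M)) ≤ (n : ℝ) := by exact_mod_cast hnge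
    have h2 := Real.log_le_log (by positivity) h1
    rwa [Real.log_pow] at h2
  set x : ℝ := (2:ℝ) ^ (4 ^ M) with hx
  have hxB : Real.log (B M) = x * Real.log 2 := by
    have : ((B M : ℕ) : ℝ) = (2:ℝ) ^ (2 ^ (4 ^ M)) := by rw [B]; push_cast; ring
    rw [this, Real.log_pow, hx]
    push_cast; ring
  have hx4 : (4:ℝ) ≤ x := by
    rw [hx]
    calc (4:ℝ) = 2 ^ 2 := by norm_num
      _ ≤ 2 ^ (4 ^ M) := by
          apply pow_le_pow_right₀ (by norm_num)
          calc 2 ≤ 4 := by norm_num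
            _ ≤ 4 ^ M := Nat.le_self_pow (by omega) 4
  have hL : x * Real.log 2 + Real.log (Real.log 2) ≤ Real.log (Real.log n) := by
    have h0 : (0:ℝ) < (B M : ℝ) * Real.log 2 := by
      have := B_pos M
      positivity
    have h1 := Real.log_le_log h0 hlogn
    rwa [Real.log_mul (Nat.cast_ne_zero.mpr (B_pos M).ne') (ne_of_gt hlog2pos), hxB] at h1
  have hloglog2 : -Real.log 2 ≤ Real.log (Real.log 2) := by
    have h12 : (1/2 : ℝ) ≤ Real.log 2 := by
      have := Real.log_two_gt_d9; linarith
    have := Real.log_le_log (by norm_num : (0:ℝ) < 1/2) h12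
    rwa [show (1/2:ℝ) = 2⁻¹ by norm_num, Real.log_inv] at this
  have hlog2d : (0.6931471803 : ℝ) < Real.log 2 := Real.log_two_gt_d9
  have hx2L : x ≤ 2 * Real.log (Real.log n) := by nlinarith
  -- combine
  have hf := f_le_pow_T S n
  have hf2 : (f S n) ^ 2 ≤ (2:ℝ) ^ (2 * T n) := by
    calc (f S n) ^ 2 ≤ ((2:ℝ) ^ T n) ^ 2 := pow_le_pow_left₀ (f_nonneg S n) hf 2
      _ = (2:ℝ) ^ (2 * T n) := by rw [← pow_mul, mul_comm]
  have h2T : (2:ℝ) ^ (2 * T n) ≤ x := by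
    rw [hx]
    apply pow_le_pow_right₀ (by norm_num)
    have := nat_aux M hM3
    nlinarith
  linarith

end TWcounter

/-- **Theorem 4, part II (Tóth–Wirsing).** For every set `S` of primes with
`∑_{p∈S} 1/p = ∞` there is a nonnegative multiplicative function `f` with
`ρ(p) = sup_ν f(p^ν) = ∞` for `p ∈ S` and `ρ(p) = 1 + 1/p` for primes `p ∉ S`,
yet `limsup f(n)/log log n = 0`. -/
theorem exists_counterexample_of_sum_div
    (S : Set ℕ) (hS : ∀ p ∈ S, Nat.Prime p)
    (hSsum : ¬ Summable fun p : S => 1 / ((p : ℕ) : ℝ)) :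
    ∃ f : ℕ → ℝ, (∀ n, 0 ≤ f n) ∧ f 1 = 1 ∧
      (∀ m n : ℕ, Nat.Coprime m n → f (m * n) = f m * f n) ∧
      (∀ p ∈ S, (⨆ ν : ℕ, ENNReal.ofReal (f (p ^ ν))) = ⊤) ∧
      (∀ p : ℕ, p.Prime → p ∉ S →
        IsLUB (Set.range fun ν : ℕ => f (p ^ ν)) (1 + 1 / (p : ℝ))) ∧
      Filter.limsup (fun n : ℕ => ENNReal.ofReal (f n / Real.log (Real.log n)))
        Filter.atTop = 0 := by
  classical
  refine ⟨TWcounter.f S, TWcounter.f_nonneg S, TWcounter.f_one S, TWcounter.f_mul S, ?_, ?_, ?_⟩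
  · -- the supremum is infinite on S
    intro p hp
    have hpprime := hS p hp
    rw [iSup_eq_top]
    intro b hb
    obtain ⟨j, hj⟩ := ENNReal.exists_nat_gt hb.ne
    refine ⟨TWcounter.B (p + (j + 1)), ?_⟩
    have hν : TWcounter.B (p + (j + 1)) ≠ 0 := (TWcounter.B_pos _).ne'
    rw [TWcounter.f_prime_pow S hpprime hν, TWcounter.g_mem S hp, ENNReal.ofReal_natCast]
    have hlev : j + 1 ≤ TWcounter.lev p (TWcounter.B (p + (j + 1))) := TWcounter.le_lev le_rfl
    have hj' : j ≤ TWcounter.lev p (TWcounter.B (p + (j + 1))) := le_trans (Nat.le_succ j) hlev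
    calc b < (j : ℝ≥0∞) := hj
      _ ≤ (TWcounter.lev p (TWcounter.B (p + (j + 1))) : ℝ≥0∞) := Nat.cast_le.mpr hj'
  · -- the LUB on primes outside of S
    intro p hp hpS
    have h1p : 0 ≤ 1 / (p : ℝ) := by positivity
    apply IsGreatest.isLUB
    constructor
    · refine ⟨TWcounter.B (p + 1), ?_⟩
      show TWcounter.f S (p ^ TWcounter.B (p + 1)) = 1 + 1 / (p : ℝ)
      rw [TWcounter.f_prime_pow S hp (TWcounter.B_pos _).ne']
      exact TWcounter.g_not_mem_pos S hpS (TWcounter.le_lev le_rfl)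
    · rintro y ⟨ν, rfl⟩
      rcases eq_or_ne ν 0 with rfl | hν
      · show TWcounter.f S (p ^ 0) ≤ 1 + 1 / (p : ℝ)
        simp only [pow_zero, TWcounter.f_one]; linarith
      · show TWcounter.f S (p ^ ν) ≤ 1 + 1 / (p : ℝ)
        rw [TWcounter.f_prime_pow S hp hν]
        exact TWcounter.g_not_mem_le S hpS ν
  · -- the limsup is zero
    set u := fun n : ℕ => ENNReal.ofReal (TWcounter.f S n / Real.log (Real.log n)) with hu
    have hLtend : Tendsto (fun n : ℕ => Real.log (Real.log n)) atTop atTop :=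
      Real.tendsto_log_atTop.comp (Real.tendsto_log_atTop.comp tendsto_natCast_atTop_atTop)
    have hmain : ∀ ε : ℝ, 0 < ε → Filter.limsup u Filter.atTop ≤ ENNReal.ofReal ε := by
      intro ε hε
      apply Filter.limsup_le_of_le (by isBoundedDefault)
      have h1 : ∀ᶠ n : ℕ in atTop, max (1 / ε) (2 / ε ^ 2) ≤ Real.log (Real.log n) :=
        hLtend.eventually_ge_atTop _
      filter_upwards [h1, eventually_ge_atTop 1] with n hn hn1
      apply ENNReal.ofReal_le_ofReal
      set L := Real.log (Real.log n) with hLdef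
      have hL1 : 1 / ε ≤ L := (le_max_left _ _).trans hn
      have hL2 : 2 / ε ^ 2 ≤ L := (le_max_right _ _).trans hn
      have hLpos : 0 < L := lt_of_lt_of_le (by positivity) hL1
      rw [div_le_iff₀ hLpos]
      rcases Nat.eq_zero_or_pos (TWcounter.T n) with h0 | h1'
      · have hfle := TWcounter.f_le_pow_T S n
        rw [h0, pow_zero] at hfle
        have h2 : 1 ≤ L * ε := (div_le_iff₀ hε).mp hL1
        linarith
      · have hkey := TWcounter.key S (by omega : n ≠ 0) h1'
        rw [← hLdef] at hkey
        have hf0 := TWcounter.f_nonneg S n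
        have h2 : 2 ≤ L * ε ^ 2 := (div_le_iff₀ (by positivity)).mp hL2
        nlinarith [mul_pos hε hLpos, sq_nonneg (TWcounter.f S n - ε * L)]
    apply le_antisymm _ (zero_le)
    apply ENNReal.le_of_forall_pos_le_add
    intro ε hε _
    rw [zero_add]
    have h := hmain ε (by exact_mod_cast hε)
    rwa [ENNReal.ofReal_coe_nnreal] at h
end

section
/- Let A be a multiplicative divisor system, i.e., A(n) ⊆ {divisors of n} for each n, A(n₁n₂) = A(n₁)·A(n₂) (elementwise product) whenever gcd(n₁,n₂)=1, and not all A(n) are empty. Then the equation ∑_{d ∈ A(n)} φ_A(d) = n for all n ≥ 1 has a solution φ_A if and only if n ∈ A(n) for all n ∈ ℕ. In this case the solution is unique, multiplicative, and satisfies 1 ≤ φ_A(n) ≤ n for all n. -/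
open scoped Pointwise
open Finset

noncomputable def phiAux (A : ℕ → Finset ℕ) (n : ℕ) : ℝ :=
  (n : ℝ) - ∑ d ∈ (((A n).erase n).filter (fun d => d < n)).attach, phiAux A d.1
  termination_by n
  decreasing_by exact (Finset.mem_filter.mp d.2).2

lemma phiAux_spec (A : ℕ → Finset ℕ) (hdvd : ∀ n : ℕ, 1 ≤ n → ∀ d ∈ A n, d ∣ n)
    (n : ℕ) (hn : 1 ≤ n) :
    phiAux A n = (n : ℝ) - ∑ d ∈ (A n).erase n, phiAux A d := by
  rw [phiAux]
  have h : ((A n).erase n).filter (fun d => d < n) = (A n).erase n := by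
    apply Finset.filter_true_of_mem
    intro d hd
    obtain ⟨hne, hmem⟩ := Finset.mem_erase.mp hd
    exact lt_of_le_of_ne (Nat.le_of_dvd hn (hdvd n hn d hmem)) hne
  rw [h, Finset.sum_attach]

lemma phiAux_solution (A : ℕ → Finset ℕ) (hdvd : ∀ n : ℕ, 1 ≤ n → ∀ d ∈ A n, d ∣ n)
    (hAA : ∀ n : ℕ, 1 ≤ n → n ∈ A n) (n : ℕ) (hn : 1 ≤ n) :
    ∑ d ∈ A n, phiAux A d = n := by
  rw [← Finset.sum_erase_add (A n) _ (hAA n hn), phiAux_spec A hdvd n hn]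
  ring

lemma solution_unique (A : ℕ → Finset ℕ) (hdvd : ∀ n : ℕ, 1 ≤ n → ∀ d ∈ A n, d ∣ n)
    (hAA : ∀ n : ℕ, 1 ≤ n → n ∈ A n) {φ ψ : ℕ → ℝ}
    (hφ : ∀ n : ℕ, 1 ≤ n → ∑ d ∈ A n, φ d = n)
    (hψ : ∀ n : ℕ, 1 ≤ n → ∑ d ∈ A n, ψ d = n) :
    ∀ n : ℕ, 1 ≤ n → ψ n = φ n := by
  intro n
  induction n using Nat.strong_induction_on with
  | _ n ih =>
    intro hn
    have h1 : ∑ d ∈ (A n).erase n, φ d + φ n = n := by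
      rw [Finset.sum_erase_add (A n) _ (hAA n hn)]; exact hφ n hn
    have h2 : ∑ d ∈ (A n).erase n, ψ d + ψ n = n := by
      rw [Finset.sum_erase_add (A n) _ (hAA n hn)]; exact hψ n hn
    have heq : ∑ d ∈ (A n).erase n, ψ d = ∑ d ∈ (A n).erase n, φ d := by
      apply Finset.sum_congr rfl
      intro d hd
      obtain ⟨hdne, hdmem⟩ := Finset.mem_erase.mp hd
      have hdn : d ∣ n := hdvd n hn d hdmem
      have hd1 : 1 ≤ d := Nat.pos_of_dvd_of_pos hdn hn
      exact ih d (lt_of_le_of_ne (Nat.le_of_dvd hn hdn) hdne) hd1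
    rw [heq] at h2
    linarith

lemma geom_bound (p : ℕ) (hp : 2 ≤ p) (k : ℕ) :
    ∑ j ∈ Finset.range k, ((p : ℝ)) ^ j ≤ (p : ℝ) ^ k - 1 := by
  induction k with
  | zero => simp
  | succ k ih =>
    rw [Finset.sum_range_succ, pow_succ]
    have hpr : (2 : ℝ) ≤ (p : ℝ) := by exact_mod_cast hp
    have h1 : (0:ℝ) ≤ (p:ℝ)^k := by positivity
    nlinarith

/-- Key lemma: any solution forces `p^k ∈ A (p^k)` and bounds at prime powers. -/
lemma key_prime_pow (A : ℕ → Finset ℕ) (hdvd : ∀ n : ℕ, 1 ≤ n → ∀ d ∈ A n, d ∣ n)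
    {φ : ℕ → ℝ} (hφ : ∀ n : ℕ, 1 ≤ n → ∑ d ∈ A n, φ d = n)
    (p : ℕ) (hp : p.Prime) :
    ∀ k : ℕ, p ^ k ∈ A (p ^ k) ∧ 1 ≤ φ (p ^ k) ∧ φ (p ^ k) ≤ (p : ℝ) ^ k := by
  intro k
  induction k using Nat.strong_induction_on with
  | _ k ih =>
    have hpk1 : 1 ≤ p ^ k := Nat.one_le_pow _ _ hp.pos
    -- every element of the erased set is p^j with j < k, with bounds
    have helem : ∀ d ∈ (A (p ^ k)).erase (p ^ k),
        1 ≤ φ d ∧ φ d ≤ (d : ℝ) ∧ ∃ j < k, d = p ^ j := by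
      intro d hd
      obtain ⟨hdne, hdmem⟩ := Finset.mem_erase.mp hd
      obtain ⟨j, hjk, rfl⟩ := (Nat.dvd_prime_pow hp).mp (hdvd _ hpk1 d hdmem)
      have hjlt : j < k := lt_of_le_of_ne hjk (fun h => hdne (by rw [h]))
      obtain ⟨-, hb1, hb2⟩ := ih j hjlt
      refine ⟨hb1, ?_, j, hjlt, rfl⟩
      rw [Nat.cast_pow]; exact hb2
    -- bound the sum over the erased set
    have hsub : (A (p ^ k)).erase (p ^ k) ⊆
        (Finset.range k).image (fun j => p ^ j) := by
      intro d hd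
      obtain ⟨-, -, j, hjlt, rfl⟩ := helem d hd
      exact Finset.mem_image.mpr ⟨j, Finset.mem_range.mpr hjlt, rfl⟩
    have hSnonneg : 0 ≤ ∑ d ∈ (A (p ^ k)).erase (p ^ k), φ d := by
      apply Finset.sum_nonneg
      intro d hd
      linarith [(helem d hd).1]
    have hSle : ∑ d ∈ (A (p ^ k)).erase (p ^ k), φ d ≤ (p : ℝ) ^ k - 1 := by
      calc ∑ d ∈ (A (p ^ k)).erase (p ^ k), φ d
          ≤ ∑ d ∈ (A (p ^ k)).erase (p ^ k), (d : ℝ) := by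
            apply Finset.sum_le_sum
            intro d hd; exact (helem d hd).2.1
        _ ≤ ∑ d ∈ (Finset.range k).image (fun j => p ^ j), (d : ℝ) := by
            apply Finset.sum_le_sum_of_subset_of_nonneg hsub
            intro d _ _; positivity
        _ = ∑ j ∈ Finset.range k, ((p : ℝ)) ^ j := by
            rw [Finset.sum_image]
            · apply Finset.sum_congr rfl
              intro j _; rw [Nat.cast_pow]
            · intro a _ b _ hab
              exact Nat.pow_right_injective hp.two_le hab
        _ ≤ (p : ℝ) ^ k - 1 := geom_bound p hp.two_le k
    -- membership
    have hmem : p ^ k ∈ A (p ^ k) := by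
      by_contra hc
      have herase : (A (p ^ k)).erase (p ^ k) = A (p ^ k) :=
        Finset.erase_eq_of_notMem hc
      have := hφ (p ^ k) hpk1
      rw [← herase] at this
      have hcast : ((p ^ k : ℕ) : ℝ) = (p : ℝ) ^ k := by push_cast; ring
      rw [hcast] at this
      have hp1 : (1:ℝ) ≤ (p : ℝ) ^ k := by
        have h2 : (1:ℝ) ≤ (p:ℝ) := by exact_mod_cast hp.one_lt.le
        exact one_le_pow₀ h2
      linarith
    -- bounds
    have hsum := hφ (p ^ k) hpk1
    rw [← Finset.sum_erase_add (A (p ^ k)) _ hmem] at hsum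
    have hcast : ((p ^ k : ℕ) : ℝ) = (p : ℝ) ^ k := by push_cast; ring
    rw [hcast] at hsum
    refine ⟨hmem, by linarith, by linarith⟩

lemma A_one_eq (A : ℕ → Finset ℕ) (hdvd : ∀ n : ℕ, 1 ≤ n → ∀ d ∈ A n, d ∣ n)
    (hmul : ∀ m n : ℕ, 1 ≤ m → 1 ≤ n → Nat.Coprime m n → A (m * n) = A m * A n)
    (hne : ∃ n : ℕ, 1 ≤ n ∧ (A n).Nonempty) : A 1 = {1} := by
  have hsub : A 1 ⊆ {1} := by
    intro d hd
    have h := Nat.dvd_one.mp (hdvd 1 le_rfl d hd)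
    simp [h]
  rcases Finset.eq_empty_or_nonempty (A 1) with h | h
  · exfalso
    obtain ⟨n, hn, a, ha⟩ := hne
    have := hmul n 1 hn le_rfl (Nat.coprime_one_right n)
    rw [mul_one, h, Finset.mul_empty] at this
    rw [this] at ha
    exact absurd ha (Finset.notMem_empty a)
  · obtain ⟨a, ha⟩ := h
    have ha1 : a = 1 := Finset.mem_singleton.mp (hsub ha)
    apply Finset.Subset.antisymm hsub
    intro x hx
    rw [Finset.mem_singleton] at hx
    rw [hx]; exact ha1 ▸ ha

lemma mem_self_of_solution (A : ℕ → Finset ℕ)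
    (hdvd : ∀ n : ℕ, 1 ≤ n → ∀ d ∈ A n, d ∣ n)
    (hmul : ∀ m n : ℕ, 1 ≤ m → 1 ≤ n → Nat.Coprime m n → A (m * n) = A m * A n)
    (hA1 : A 1 = {1})
    {φ : ℕ → ℝ} (hφ : ∀ n : ℕ, 1 ≤ n → ∑ d ∈ A n, φ d = n) :
    ∀ n : ℕ, 1 ≤ n → n ∈ A n := by
  intro n
  induction n using Nat.recOnPosPrimePosCoprime with
  | prime_pow p k hp hk => exact fun _ => (key_prime_pow A hdvd hφ p hp k).1
  | zero => intro h; omega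
  | one => intro _; rw [hA1]; exact Finset.mem_singleton_self 1
  | coprime a b ha hb hab iha ihb =>
    intro _
    rw [hmul a b (by omega) (by omega) hab]
    exact Finset.mul_mem_mul (iha (by omega)) (ihb (by omega))

lemma phiAux_one (A : ℕ → Finset ℕ) (hdvd : ∀ n : ℕ, 1 ≤ n → ∀ d ∈ A n, d ∣ n)
    (hA1 : A 1 = {1}) : phiAux A 1 = 1 := by
  rw [phiAux_spec A hdvd 1 le_rfl, hA1]
  simp

noncomputable def phiMul (A : ℕ → Finset ℕ) (n : ℕ) : ℝ :=
  n.factorization.prod fun p k => phiAux A (p ^ k)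

lemma phiMul_one (A : ℕ → Finset ℕ) : phiMul A 1 = 1 := by
  simp [phiMul]

lemma phiMul_prime_pow (A : ℕ → Finset ℕ) (hdvd : ∀ n : ℕ, 1 ≤ n → ∀ d ∈ A n, d ∣ n)
    (hA1 : A 1 = {1}) {p : ℕ} (hp : p.Prime) (k : ℕ) :
    phiMul A (p ^ k) = phiAux A (p ^ k) := by
  cases k with
  | zero => simp [phiMul_one, phiAux_one A hdvd hA1]
  | succ k =>
    rw [phiMul, hp.factorization_pow, Finsupp.prod_single_index]
    simp [phiAux_one A hdvd hA1]

lemma phiMul_mul (A : ℕ → Finset ℕ) {a b : ℕ} (ha : a ≠ 0) (hb : b ≠ 0)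
    (hab : Nat.Coprime a b) : phiMul A (a * b) = phiMul A a * phiMul A b := by
  rw [phiMul, Nat.factorization_mul ha hb, Finsupp.prod_add_index_of_disjoint]
  · rfl
  · rw [Nat.support_factorization, Nat.support_factorization]
    exact hab.disjoint_primeFactors

lemma sum_over_mul_set (A : ℕ → Finset ℕ) (hdvd : ∀ n : ℕ, 1 ≤ n → ∀ d ∈ A n, d ∣ n)
    {f : ℕ → ℝ} {a b : ℕ} (ha : 1 ≤ a) (hb : 1 ≤ b) (hab : Nat.Coprime a b)
    (hmf : ∀ x y : ℕ, x ∣ a → y ∣ b → f (x * y) = f x * f y) :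
    ∑ d ∈ A a * A b, f d = (∑ x ∈ A a, f x) * (∑ y ∈ A b, f y) := by
  rw [Finset.mul_def, Finset.sum_image, Finset.sum_product, Finset.sum_mul_sum]
  · apply Finset.sum_congr rfl
    intro x hx
    apply Finset.sum_congr rfl
    intro y hy
    exact hmf x y (hdvd a ha x hx) (hdvd b hb y hy)
  · intro q hq r hr hqr
    beta_reduce at hqr
    obtain ⟨hq1, hq2⟩ := Finset.mem_product.mp hq
    obtain ⟨hr1, hr2⟩ := Finset.mem_product.mp hr
    have hxa : q.1 ∣ a := hdvd a ha _ hq1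
    have hxb : q.2 ∣ b := hdvd b hb _ hq2
    have hya : r.1 ∣ a := hdvd a ha _ hr1
    have hyb : r.2 ∣ b := hdvd b hb _ hr2
    have h1 : q.1 = r.1 := by
      apply Nat.dvd_antisymm
      · exact (Nat.Coprime.coprime_dvd_left hxa (Nat.Coprime.coprime_dvd_right hyb hab)).dvd_of_dvd_mul_right (hqr ▸ Dvd.intro _ rfl)
      · exact (Nat.Coprime.coprime_dvd_left hya (Nat.Coprime.coprime_dvd_right hxb hab)).dvd_of_dvd_mul_right (hqr ▸ Dvd.intro _ rfl)
    have hq1pos : 0 < q.1 := Nat.pos_of_dvd_of_pos hxa ha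
    have h2 : q.2 = r.2 := by
      have := hqr
      rw [h1] at this
      exact Nat.eq_of_mul_eq_mul_left (h1 ▸ hq1pos) this
    exact Prod.ext h1 h2

lemma phiMul_solution (A : ℕ → Finset ℕ)
    (hdvd : ∀ n : ℕ, 1 ≤ n → ∀ d ∈ A n, d ∣ n)
    (hmul : ∀ m n : ℕ, 1 ≤ m → 1 ≤ n → Nat.Coprime m n → A (m * n) = A m * A n)
    (hA1 : A 1 = {1}) (hAA : ∀ n : ℕ, 1 ≤ n → n ∈ A n) :
    ∀ n : ℕ, 1 ≤ n → ∑ d ∈ A n, phiMul A d = n := by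
  intro n
  induction n using Nat.recOnPosPrimePosCoprime with
  | prime_pow p k hp hk =>
    intro _
    have hpk1 : 1 ≤ p ^ k := Nat.one_le_pow _ _ hp.pos
    have : ∑ d ∈ A (p ^ k), phiMul A d = ∑ d ∈ A (p ^ k), phiAux A d := by
      apply Finset.sum_congr rfl
      intro d hd
      obtain ⟨j, hjk, rfl⟩ := (Nat.dvd_prime_pow hp).mp (hdvd _ hpk1 d hd)
      exact phiMul_prime_pow A hdvd hA1 hp j
    rw [this]
    exact phiAux_solution A hdvd hAA _ hpk1
  | zero => intro h; omega
  | one =>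
    intro _
    rw [hA1]
    simp [phiMul_one]
  | coprime a b ha hb hab iha ihb =>
    intro _
    have ha1 : 1 ≤ a := by omega
    have hb1 : 1 ≤ b := by omega
    rw [hmul a b ha1 hb1 hab]
    rw [sum_over_mul_set A hdvd ha1 hb1 hab]
    · rw [iha ha1, ihb hb1]; push_cast; ring
    · intro x y hx hy
      exact phiMul_mul A (Nat.pos_of_dvd_of_pos hx ha1).ne'
        (Nat.pos_of_dvd_of_pos hy hb1).ne'
        (Nat.Coprime.coprime_dvd_left hx (Nat.Coprime.coprime_dvd_right hy hab))

lemma phiAux_eq_phiMul (A : ℕ → Finset ℕ)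
    (hdvd : ∀ n : ℕ, 1 ≤ n → ∀ d ∈ A n, d ∣ n)
    (hmul : ∀ m n : ℕ, 1 ≤ m → 1 ≤ n → Nat.Coprime m n → A (m * n) = A m * A n)
    (hA1 : A 1 = {1}) (hAA : ∀ n : ℕ, 1 ≤ n → n ∈ A n) :
    ∀ n : ℕ, 1 ≤ n → phiAux A n = phiMul A n :=
  solution_unique A hdvd hAA (phiMul_solution A hdvd hmul hA1 hAA)
    (phiAux_solution A hdvd hAA)

lemma phiAux_bounds (A : ℕ → Finset ℕ)
    (hdvd : ∀ n : ℕ, 1 ≤ n → ∀ d ∈ A n, d ∣ n)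
    (hmul : ∀ m n : ℕ, 1 ≤ m → 1 ≤ n → Nat.Coprime m n → A (m * n) = A m * A n)
    (hA1 : A 1 = {1}) (hAA : ∀ n : ℕ, 1 ≤ n → n ∈ A n) :
    ∀ n : ℕ, 1 ≤ n → 1 ≤ phiAux A n ∧ phiAux A n ≤ (n : ℝ) := by
  intro n hn
  have hkey := fun (p : ℕ) (hp : p.Prime) (k : ℕ) =>
    key_prime_pow A hdvd (phiAux_solution A hdvd hAA) p hp k
  rw [phiAux_eq_phiMul A hdvd hmul hA1 hAA n hn, phiMul]
  have hprime : ∀ p ∈ n.factorization.support, p.Prime := by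
    intro p hp
    rw [Nat.support_factorization] at hp
    exact Nat.prime_of_mem_primeFactors hp
  rw [Finsupp.prod]
  constructor
  · calc (1:ℝ) = ∏ _p ∈ n.factorization.support, (1:ℝ) := by simp
      _ ≤ ∏ p ∈ n.factorization.support, phiAux A (p ^ n.factorization p) := by
          apply Finset.prod_le_prod
          · intros; norm_num
          · intro p hp
            exact (hkey p (hprime p hp) (n.factorization p)).2.1
  · have : ((n : ℝ)) = ∏ p ∈ n.factorization.support, ((p : ℝ)) ^ (n.factorization p) := by
      have h := Nat.factorization_prod_pow_eq_self (n := n) (by omega)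
      calc ((n:ℝ)) = ((n.factorization.prod fun p k => p ^ k : ℕ) : ℝ) := by rw [h]
        _ = _ := by
          rw [Finsupp.prod]
          push_cast
          rfl
    rw [this]
    apply Finset.prod_le_prod
    · intro p hp
      linarith [(hkey p (hprime p hp) (n.factorization p)).2.1]
    · intro p hp
      exact (hkey p (hprime p hp) (n.factorization p)).2.2

/-- **Theorem 5 (Tóth–Wirsing).** Let `A` be a multiplicative divisor system:
`A n` is a set of divisors of `n`, `A (m n) = A m * A n` (elementwise product) for
coprime `m, n`, and not all `A n` are empty.  Then `∑_{d ∈ A(n)} φ_A(d) = n` for all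
`n ≥ 1` has a solution iff `n ∈ A n` for all `n ≥ 1`; in that case the solution is
unique (on `n ≥ 1`), multiplicative, and satisfies `1 ≤ φ_A(n) ≤ n`. -/
theorem phiA_exists_iff
    (A : ℕ → Finset ℕ)
    (hdvd : ∀ n : ℕ, 1 ≤ n → ∀ d ∈ A n, d ∣ n)
    (hmul : ∀ m n : ℕ, 1 ≤ m → 1 ≤ n → Nat.Coprime m n → A (m * n) = A m * A n)
    (hne : ∃ n : ℕ, 1 ≤ n ∧ (A n).Nonempty) :
    ((∃ φ : ℕ → ℝ, ∀ n : ℕ, 1 ≤ n → ∑ d ∈ A n, φ d = n) ↔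
        (∀ n : ℕ, 1 ≤ n → n ∈ A n)) ∧
    ((∀ n : ℕ, 1 ≤ n → n ∈ A n) →
      ∃ φ : ℕ → ℝ,
        (∀ n : ℕ, 1 ≤ n → ∑ d ∈ A n, φ d = n) ∧
        φ 1 = 1 ∧
        (∀ m n : ℕ, 1 ≤ m → 1 ≤ n → Nat.Coprime m n → φ (m * n) = φ m * φ n) ∧
        (∀ n : ℕ, 1 ≤ n → 1 ≤ φ n ∧ φ n ≤ n) ∧
        (∀ ψ : ℕ → ℝ, (∀ n : ℕ, 1 ≤ n → ∑ d ∈ A n, ψ d = n) →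
          ∀ n : ℕ, 1 ≤ n → ψ n = φ n)) := by
  have hA1 : A 1 = {1} := A_one_eq A hdvd hmul hne
  constructor
  · constructor
    · rintro ⟨φ, hφ⟩
      exact mem_self_of_solution A hdvd hmul hA1 hφ
    · intro hAA
      exact ⟨phiAux A, phiAux_solution A hdvd hAA⟩
  · intro hAA
    refine ⟨phiAux A, phiAux_solution A hdvd hAA, phiAux_one A hdvd hA1, ?_,
      phiAux_bounds A hdvd hmul hA1 hAA,
      fun ψ hψ => solution_unique A hdvd hAA (phiAux_solution A hdvd hAA) hψ⟩
    intro m n hm hn hmn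
    have hmn1 : 1 ≤ m * n := Nat.one_le_iff_ne_zero.mpr (by positivity)
    rw [phiAux_eq_phiMul A hdvd hmul hA1 hAA (m * n) hmn1,
      phiMul_mul A (by omega) (by omega) hmn,
      ← phiAux_eq_phiMul A hdvd hmul hA1 hAA m hm,
      ← phiAux_eq_phiMul A hdvd hmul hA1 hAA n hn]
end

section
/- Let A be a multiplicative divisor system with n ∈ A(n) for all n, and φ_A the unique multiplicative solution of ∑_{d∈A(n)} φ_A(d) = n. Then for every prime p and every ν ≥ 1, φ_A(p^ν) ≥ p^ν − p^{ν−1} − p^{ν−2} − ⋯ − 1, and consequently p^ν/φ_A(p^ν) < (p−1)/(p−2) for all p > 2. -/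
open scoped Pointwise

/-- For a multiplicative divisor system `A` with `n ∈ A n` and associated Euler
function `φ_A`, one has `φ_A(p^ν) ≥ p^ν − p^{ν−1} − ⋯ − 1` for every prime `p` and
`ν ≥ 1`, so `p^ν / φ_A(p^ν) < (p−1)/(p−2)` when `p > 2`. -/
theorem phiA_prime_pow_lower_bound
    (A : ℕ → Finset ℕ)
    (hdvd : ∀ n : ℕ, 1 ≤ n → ∀ d ∈ A n, d ∣ n)
    (hmul : ∀ m n : ℕ, 1 ≤ m → 1 ≤ n → Nat.Coprime m n → A (m * n) = A m * A n)
    (hself : ∀ n : ℕ, 1 ≤ n → n ∈ A n)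
    (φ : ℕ → ℝ)
    (hφsum : ∀ n : ℕ, 1 ≤ n → ∑ d ∈ A n, φ d = n)
    (hφ1 : φ 1 = 1)
    (hφm : ∀ m n : ℕ, 1 ≤ m → 1 ≤ n → Nat.Coprime m n → φ (m * n) = φ m * φ n)
    (hφbd : ∀ n : ℕ, 1 ≤ n → 1 ≤ φ n ∧ φ n ≤ n) :
    ∀ p : ℕ, p.Prime → ∀ ν : ℕ, 1 ≤ ν →
      ((p : ℝ) ^ ν - ∑ i ∈ Finset.range ν, (p : ℝ) ^ i ≤ φ (p ^ ν)) ∧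
      (2 < p → (p : ℝ) ^ ν / φ (p ^ ν) < ((p : ℝ) - 1) / ((p : ℝ) - 2)) := by
  intro p hp ν hν
  have hp1 : 1 < p := hp.one_lt
  have hn1 : 1 ≤ p ^ ν := Nat.one_le_pow _ _ hp.pos
  -- every d in A (p^ν) \ {p^ν} is some p^i with i < ν
  have hsub : A (p ^ ν) \ {p ^ ν} ⊆ (Finset.range ν).image (p ^ ·) := by
    intro d hd
    rw [Finset.mem_sdiff, Finset.mem_singleton] at hd
    obtain ⟨hdA, hdne⟩ := hd
    obtain ⟨i, hi, rfl⟩ := (Nat.dvd_prime_pow hp).mp (hdvd _ hn1 d hdA)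
    refine Finset.mem_image.mpr ⟨i, Finset.mem_range.mpr ?_, rfl⟩
    rcases lt_or_eq_of_le hi with h | rfl
    · exact h
    · exact absurd rfl hdne
  have hφnonneg : ∀ d : ℕ, 1 ≤ d → 0 ≤ φ d := fun d hd =>
    le_trans zero_le_one (hφbd d hd).1
  -- key sum bound
  have hsumle : ∑ d ∈ A (p ^ ν) \ {p ^ ν}, φ d ≤ ∑ i ∈ Finset.range ν, (p : ℝ) ^ i := by
    calc ∑ d ∈ A (p ^ ν) \ {p ^ ν}, φ d
        ≤ ∑ d ∈ (Finset.range ν).image (p ^ ·), φ d := by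
          apply Finset.sum_le_sum_of_subset_of_nonneg hsub
          intro d hd _
          obtain ⟨i, _, rfl⟩ := Finset.mem_image.mp hd
          exact hφnonneg _ (Nat.one_le_pow _ _ hp.pos)
      _ = ∑ i ∈ Finset.range ν, φ (p ^ i) := by
          apply Finset.sum_image
          intro a _ b _ hab
          exact Nat.pow_right_injective hp1 hab
      _ ≤ ∑ i ∈ Finset.range ν, (p : ℝ) ^ i := by
          apply Finset.sum_le_sum
          intro i _
          have := (hφbd (p ^ i) (Nat.one_le_pow _ _ hp.pos)).2
          simpa [Nat.cast_pow] using this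
  have hmem : p ^ ν ∈ A (p ^ ν) := hself _ hn1
  have hsplit : φ (p ^ ν) + ∑ d ∈ A (p ^ ν) \ {p ^ ν}, φ d = (p : ℝ) ^ ν := by
    have h := hφsum (p ^ ν) hn1
    rw [← Finset.sum_sdiff (Finset.singleton_subset_iff.mpr hmem)] at h
    simp only [Finset.sum_singleton] at h
    rw [add_comm]
    rw [h, Nat.cast_pow]
  have hlow : (p : ℝ) ^ ν - ∑ i ∈ Finset.range ν, (p : ℝ) ^ i ≤ φ (p ^ ν) := by
    linarith
  refine ⟨hlow, fun hp2 => ?_⟩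
  have hx : (3 : ℝ) ≤ (p : ℝ) := by exact_mod_cast hp2
  have hφpos : (0 : ℝ) < φ (p ^ ν) := lt_of_lt_of_le zero_lt_one (hφbd _ hn1).1
  have hgeom : (∑ i ∈ Finset.range ν, (p : ℝ) ^ i) * ((p : ℝ) - 1) = (p : ℝ) ^ ν - 1 :=
    geom_sum_mul _ _
  rw [div_lt_div_iff₀ hφpos (by linarith)]
  have h2 : ((p : ℝ) ^ ν - ∑ i ∈ Finset.range ν, (p : ℝ) ^ i) * ((p : ℝ) - 1)
      ≤ φ (p ^ ν) * ((p : ℝ) - 1) :=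
    mul_le_mul_of_nonneg_right hlow (by linarith)
  nlinarith [h2, hgeom]
end

section
/- Let A be a multiplicative divisor system with n ∈ A(n) for all n, and φ_A the unique multiplicative solution of ∑_{d∈A(n)} φ_A(d) = n. If p is prime and e ≥ 2 with p^{e−1} ∈ A(p^e), then φ_A(p^e) ≤ p^e − p^{e−1} + p^{e−2} + p^{e−3} + ⋯ + 1; if e = 1 and 1 ∈ A(p), then φ_A(p) ≤ p − 1. In particular p^e/φ_A(p^e) ≥ p(p−1)/(p² − 2p + 2) in the case e ≥ 2. -/
open scoped Pointwise

/-- For a multiplicative divisor system `A` with `n ∈ A n` and associated Euler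
function `φ_A`: if `p` is prime, `e ≥ 2` and `p^{e−1} ∈ A(p^e)`, then
`φ_A(p^e) ≤ p^e − p^{e−1} + p^{e−2} + ⋯ + 1` and
`p^e / φ_A(p^e) ≥ p(p−1)/(p² − 2p + 2)`; if `e = 1` and `1 ∈ A(p)`, then
`φ_A(p) ≤ p − 1`. -/
theorem phiA_prime_pow_upper_bound
    (A : ℕ → Finset ℕ)
    (hdvd : ∀ n : ℕ, 1 ≤ n → ∀ d ∈ A n, d ∣ n)
    (hmul : ∀ m n : ℕ, 1 ≤ m → 1 ≤ n → Nat.Coprime m n → A (m * n) = A m * A n)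
    (hself : ∀ n : ℕ, 1 ≤ n → n ∈ A n)
    (φ : ℕ → ℝ)
    (hφsum : ∀ n : ℕ, 1 ≤ n → ∑ d ∈ A n, φ d = n)
    (hφ1 : φ 1 = 1)
    (hφm : ∀ m n : ℕ, 1 ≤ m → 1 ≤ n → Nat.Coprime m n → φ (m * n) = φ m * φ n)
    (hφbd : ∀ n : ℕ, 1 ≤ n → 1 ≤ φ n ∧ φ n ≤ n) :
    ∀ p : ℕ, p.Prime →
      (∀ e : ℕ, 2 ≤ e → p ^ (e - 1) ∈ A (p ^ e) →
        (φ (p ^ e) ≤ (p : ℝ) ^ e - (p : ℝ) ^ (e - 1) +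
            ∑ i ∈ Finset.range (e - 1), (p : ℝ) ^ i) ∧
        ((p : ℝ) * ((p : ℝ) - 1) / ((p : ℝ) ^ 2 - 2 * p + 2) ≤
          (p : ℝ) ^ e / φ (p ^ e))) ∧
      (1 ∈ A p → φ p ≤ (p : ℝ) - 1) := by
  intro p hp
  have hp2 : (2:ℕ) ≤ p := hp.two_le
  have hpR : (2:ℝ) ≤ (p:ℝ) := by exact_mod_cast hp2
  have hppos : 0 < p := hp.pos
  -- key identity
  have key : ∀ n : ℕ, 1 ≤ n → φ n = (n:ℝ) - ∑ d ∈ (A n).erase n, φ d := by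
    intro n hn
    have h := hφsum n hn
    have h2 := Finset.add_sum_erase (A n) φ (hself n hn)
    linarith
  have hφnonneg : ∀ d : ℕ, 1 ≤ d → 0 ≤ φ d := fun d hd => le_trans zero_le_one (hφbd d hd).1
  -- lower bound on φ (p^m) for m ≥ 1
  have lower : ∀ m : ℕ, (p:ℝ)^m - ∑ i ∈ Finset.range m, (p:ℝ)^i ≤ φ (p^m) := by
    intro m
    have hpm : 1 ≤ p ^ m := Nat.one_le_pow _ _ hppos
    rw [key (p^m) hpm]
    have hsub : (A (p^m)).erase (p^m) ⊆
        (Finset.range m).map ⟨(p ^ ·), Nat.pow_right_injective hp2⟩ := by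
      intro d hd
      have hdne : d ≠ p ^ m := Finset.ne_of_mem_erase hd
      have hdmem : d ∈ A (p^m) := Finset.mem_of_mem_erase hd
      obtain ⟨i, hi, rfl⟩ := (Nat.dvd_prime_pow hp).mp (hdvd _ hpm d hdmem)
      have : i < m := lt_of_le_of_ne hi (fun h => hdne (by rw [h]))
      exact Finset.mem_map.mpr ⟨i, Finset.mem_range.mpr this, rfl⟩
    have h1 : ∑ d ∈ (A (p^m)).erase (p^m), φ d ≤
        ∑ d ∈ (Finset.range m).map ⟨(p ^ ·), Nat.pow_right_injective hp2⟩, φ d := by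
      apply Finset.sum_le_sum_of_subset_of_nonneg hsub
      intro d hd _
      rcases Finset.mem_map.mp hd with ⟨i, _, rfl⟩
      exact hφnonneg _ (Nat.one_le_pow _ _ hppos)
    have h2 : ∑ d ∈ (Finset.range m).map ⟨(p ^ ·), Nat.pow_right_injective hp2⟩, φ d ≤
        ∑ i ∈ Finset.range m, (p:ℝ)^i := by
      rw [Finset.sum_map]
      apply Finset.sum_le_sum
      intro i _
      have := (hφbd (p^i) (Nat.one_le_pow _ _ hppos)).2
      simpa [Nat.cast_pow] using this
    push_cast
    linarith
  constructor
  · intro e he hmem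
    have hpe : 1 ≤ p ^ e := Nat.one_le_pow _ _ hppos
    have hne : p ^ (e-1) ≠ p ^ e := by
      intro h
      have := Nat.pow_right_injective hp2 h
      omega
    have hmem' : p ^ (e-1) ∈ (A (p^e)).erase (p^e) := Finset.mem_erase.mpr ⟨hne, hmem⟩
    have hsingle : φ (p^(e-1)) ≤ ∑ d ∈ (A (p^e)).erase (p^e), φ d := by
      apply Finset.single_le_sum (f := φ) _ hmem'
      intro d hd
      have hdmem : d ∈ A (p^e) := Finset.mem_of_mem_erase hd
      have : d ∣ p ^ e := hdvd _ hpe d hdmem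
      exact hφnonneg d (Nat.one_le_of_lt (Nat.lt_of_lt_of_le Nat.zero_lt_one
        (Nat.one_le_iff_ne_zero.mpr (fun h => by subst h; simp at this; omega))))
    have hlow := lower (e-1)
    have hub : φ (p ^ e) ≤ (p:ℝ)^e - (p:ℝ)^(e-1) + ∑ i ∈ Finset.range (e-1), (p:ℝ)^i := by
      rw [key (p^e) hpe]
      push_cast
      linarith
    refine ⟨hub, ?_⟩
    -- ratio bound
    have hφpos : (0:ℝ) < φ (p^e) := lt_of_lt_of_le zero_lt_one (hφbd _ hpe).1
    have hden : (0:ℝ) < (p:ℝ)^2 - 2*p + 2 := by nlinarith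
    rw [div_le_div_iff₀ hden hφpos]
    set y : ℝ := (p:ℝ)^(e-1) with hy
    have hxy : (p:ℝ)^e = p * y := by
      rw [hy, ← pow_succ']
      congr 1
      omega
    have hS : ∑ i ∈ Finset.range (e-1), (p:ℝ)^i = (y - 1) / ((p:ℝ) - 1) := by
      rw [geom_sum_eq (by linarith) (e-1), hy]
    have hy1 : (1:ℝ) ≤ y := one_le_pow₀ (by linarith)
    have hub' : φ (p^e) ≤ p*y - y + (y-1)/((p:ℝ)-1) := by
      rw [← hxy, ← hS]; exact hub
    have hpm1 : (0:ℝ) < (p:ℝ) - 1 := by linarith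
    have hdiv : ((p:ℝ)-1) * ((y-1)/((p:ℝ)-1)) = y - 1 := by
      field_simp
    have hnn : (0:ℝ) ≤ (p:ℝ)*((p:ℝ)-1) := by nlinarith
    have hmul2 := mul_le_mul_of_nonneg_left hub' hnn
    have hQ : (p:ℝ)*(((p:ℝ)-1)*((y-1)/((p:ℝ)-1))) = (p:ℝ)*(y-1) := by rw [hdiv]
    nlinarith [hmul2, hQ, hy1, hpR, hφpos]
  · intro h1
    have hpp : 1 ≤ p := hp.one_le
    have h1mem : (1:ℕ) ∈ (A p).erase p := Finset.mem_erase.mpr ⟨hp.one_lt.ne, h1⟩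
    have hsingle : φ 1 ≤ ∑ d ∈ (A p).erase p, φ d := by
      apply Finset.single_le_sum (f := φ) _ h1mem
      intro d hd
      have : d ∣ p := hdvd _ hpp d (Finset.mem_of_mem_erase hd)
      exact hφnonneg d (Nat.pos_of_dvd_of_pos this hppos)
    rw [key p hpp]
    rw [hφ1] at hsingle
    linarith
end

section
/- There exists a multiplicative divisor system A with n ∈ A(n) for all n such that the associated Euler function φ_A satisfies sup_{ν≥0} 2^ν/φ_A(2^ν) = ∞. Concretely: given any infinite set N = {n₁ < n₂ < ⋯} ⊆ ℕ with sup_j (n_j − n_{j−1}) = ∞ (n₀ = 0), define A at powers of 2 by A E₂(n) = {0,1,…,n} for n ∈ N and A E₂(n) = {n} for n ∉ N; then φ_A(2^n) = 2^n for n ∉ N and φ_A(2^{n_j}) = 2^{n_{j−1}} for all j. -/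
open scoped Pointwise
open Finset

namespace TW7

variable (nseq : ℕ → ℕ)

open Classical in
/-- The Euler value at `2^ν`. -/
noncomputable def f (ν : ℕ) : ℝ :=
  if h : ∃ j, nseq (j + 1) = ν then 2 ^ (nseq h.choose) else 2 ^ ν

open Classical in
/-- admissible divisors of `2^ν` -/
noncomputable def S (ν : ℕ) : Finset ℕ :=
  if ∃ j, nseq (j + 1) = ν then (Finset.range (ν + 1)).image (fun δ => 2 ^ δ) else {2 ^ ν}

noncomputable def A (n : ℕ) : Finset ℕ :=
  (S nseq (padicValNat 2 n)).image (· * (n / 2 ^ padicValNat 2 n))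

noncomputable def φ (n : ℕ) : ℝ :=
  f nseq (padicValNat 2 n) * ((n / 2 ^ padicValNat 2 n : ℕ) : ℝ)

variable {nseq} (h0 : nseq 0 = 0) (hmono : StrictMono nseq)

section
include h0 hmono

lemma not_inN_zero : ¬ ∃ j, nseq (j + 1) = 0 := by
  rintro ⟨j, hj⟩
  have := hmono (show 0 < j + 1 by omega)
  omega

end

include hmono in
lemma f_mem (j : ℕ) : f nseq (nseq (j + 1)) = 2 ^ nseq j := by
  have h : ∃ i, nseq (i + 1) = nseq (j + 1) := ⟨j, rfl⟩
  rw [f, dif_pos h]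
  have : h.choose + 1 = j + 1 := hmono.injective h.choose_spec
  congr 2
  omega

lemma f_not_mem {ν : ℕ} (h : ¬ ∃ j, nseq (j + 1) = ν) : f nseq ν = 2 ^ ν := dif_neg h

include hmono in
lemma not_inN_between {j δ : ℕ} (h1 : nseq j < δ) (h2 : δ < nseq (j + 1)) :
    ¬ ∃ i, nseq (i + 1) = δ := by
  rintro ⟨i, rfl⟩
  rcases le_or_gt (i + 1) j with h | h
  · exact absurd (hmono.monotone h) (by omega)
  · exact absurd (hmono.monotone (show j + 1 ≤ i + 1 by omega)) (by omega)

include h0 hmono in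
lemma f_one_le (ν : ℕ) : 1 ≤ f nseq ν := by
  rw [f]
  split
  · exact one_le_pow₀ one_le_two
  · exact one_le_pow₀ one_le_two

include h0 hmono in
lemma f_le (ν : ℕ) : f nseq ν ≤ 2 ^ ν := by
  rw [f]
  split
  · rename_i h
    have h1 : nseq h.choose < nseq (h.choose + 1) := hmono (Nat.lt_succ_self _)
    have h2 := h.choose_spec
    exact pow_le_pow_right₀ one_le_two (by omega)
  · exact le_refl _

include h0 hmono in
lemma sum_f (j : ℕ) : ∑ δ ∈ Finset.range (nseq j + 1), f nseq δ = 2 ^ nseq j := by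
  induction j with
  | zero =>
    rw [h0]
    simp [f_not_mem (not_inN_zero h0 hmono)]
  | succ j ih =>
    set a := nseq j with ha
    set b := nseq (j + 1) with hb
    have hab : a < b := hmono (Nat.lt_succ_self j)
    rw [Finset.range_eq_Ico, ← Finset.sum_Ico_consecutive _ (Nat.zero_le (a + 1)) (by omega),
      ← Finset.range_eq_Ico, ih, Finset.sum_Ico_succ_top (by omega)]
    have hmid : ∑ δ ∈ Finset.Ico (a + 1) b, f nseq δ = ∑ δ ∈ Finset.Ico (a + 1) b, (2 : ℝ) ^ δ := by
      refine Finset.sum_congr rfl fun δ hδ => ?_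
      rw [Finset.mem_Ico] at hδ
      exact f_not_mem (not_inN_between (j := j) hmono (by omega) (by omega))
    rw [hmid, geom_sum_Ico (by norm_num : (2:ℝ) ≠ 1) (by omega), f_mem hmono, pow_succ]
    ring

lemma padicValNat_two_pow_mul {ν m : ℕ} (hm : ¬ 2 ∣ m) : padicValNat 2 (2 ^ ν * m) = ν := by
  have hm0 : m ≠ 0 := by rintro rfl; exact hm ⟨0, rfl⟩
  haveI : Fact (Nat.Prime 2) := ⟨Nat.prime_two⟩
  rw [padicValNat.mul (by positivity) hm0, padicValNat.prime_pow,
    padicValNat.eq_zero_of_not_dvd hm, add_zero]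

lemma A_two_pow_mul {ν m : ℕ} (hm : ¬ 2 ∣ m) :
    A nseq (2 ^ ν * m) = (S nseq ν).image (· * m) := by
  have hm0 : m ≠ 0 := by rintro rfl; exact hm ⟨0, rfl⟩
  rw [A, padicValNat_two_pow_mul hm, Nat.mul_div_cancel_left _ (Nat.pow_pos (n := ν) two_pos)]

lemma φ_two_pow_mul {ν m : ℕ} (hm : ¬ 2 ∣ m) :
    φ nseq (2 ^ ν * m) = f nseq ν * m := by
  rw [φ, padicValNat_two_pow_mul hm, Nat.mul_div_cancel_left _ (Nat.pow_pos (n := ν) two_pos)]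

/-- decomposition of a positive natural number -/
lemma decomp {n : ℕ} (hn : n ≠ 0) : ∃ ν m, ¬ 2 ∣ m ∧ n = 2 ^ ν * m := by
  haveI : Fact (Nat.Prime 2) := ⟨Nat.prime_two⟩
  refine ⟨padicValNat 2 n, n / 2 ^ padicValNat 2 n, ?_, ?_⟩
  · intro hdvd
    have h1 : 2 ^ (padicValNat 2 n + 1) ∣ n := by
      have h2 : 2 ^ padicValNat 2 n ∣ n := pow_padicValNat_dvd
      obtain ⟨k, hk⟩ := hdvd
      refine ⟨k, ?_⟩
      rw [pow_succ]
      calc n = 2 ^ padicValNat 2 n * (n / 2 ^ padicValNat 2 n) := (Nat.mul_div_cancel' h2).symm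
        _ = 2 ^ padicValNat 2 n * (2 * k) := by rw [hk]
        _ = 2 ^ padicValNat 2 n * 2 * k := by ring
    exact pow_succ_padicValNat_not_dvd hn h1
  · exact (Nat.mul_div_cancel' pow_padicValNat_dvd).symm

lemma S_mem_pow {ν s : ℕ} (hs : s ∈ S nseq ν) : ∃ δ ≤ ν, s = 2 ^ δ := by
  classical
  rw [S] at hs
  split at hs
  · simp only [Finset.mem_image, Finset.mem_range] at hs
    obtain ⟨δ, hδ, rfl⟩ := hs
    exact ⟨δ, by omega, rfl⟩
  · rw [Finset.mem_singleton] at hs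
    exact ⟨ν, le_refl _, hs⟩

lemma pow_self_mem_S (ν : ℕ) : 2 ^ ν ∈ S nseq ν := by
  classical
  rw [S]
  split
  · exact Finset.mem_image.2 ⟨ν, Finset.mem_range.2 (Nat.lt_succ_self ν), rfl⟩
  · exact Finset.mem_singleton_self _

include h0 hmono in
lemma f_zero : f nseq 0 = 1 := by
  rw [f_not_mem (not_inN_zero h0 hmono)]; norm_num

include h0 hmono in
lemma S_zero : S nseq 0 = {1} := by
  classical
  rw [S, if_neg (not_inN_zero h0 hmono)]
  norm_num

include h0 hmono in
lemma A_odd {n : ℕ} (hn : ¬ 2 ∣ n) : A nseq n = {n} := by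
  have h := A_two_pow_mul (nseq := nseq) (ν := 0) (m := n) hn
  rw [pow_zero, one_mul] at h
  rw [h, S_zero h0 hmono, Finset.image_singleton, one_mul]

include h0 hmono in
lemma φ_odd {n : ℕ} (hn : ¬ 2 ∣ n) : φ nseq n = n := by
  have h := φ_two_pow_mul (nseq := nseq) (ν := 0) (m := n) hn
  rw [pow_zero, one_mul] at h
  rw [h, f_zero h0 hmono, one_mul]

lemma A_pow (ν : ℕ) : A nseq (2 ^ ν) = S nseq ν := by
  have h := A_two_pow_mul (nseq := nseq) (ν := ν) (m := 1) (by norm_num)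
  rw [mul_one] at h
  rw [h]
  simp

lemma φ_pow (ν : ℕ) : φ nseq (2 ^ ν) = f nseq ν := by
  have h := φ_two_pow_mul (nseq := nseq) (ν := ν) (m := 1) (by norm_num)
  rw [mul_one] at h
  rw [h]
  simp

end TW7

open TW7 in
/-- **Example after Theorem 7 (Tóth–Wirsing).** -/
theorem exists_divisor_system_with_unbounded_two_ratio
    (nseq : ℕ → ℕ) (h0 : nseq 0 = 0) (hmono : StrictMono nseq)
    (hgap : ∀ C : ℕ, ∃ j : ℕ, C ≤ nseq (j + 1) - nseq j) :
    ∃ (A : ℕ → Finset ℕ) (φ : ℕ → ℝ),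
      (∀ n : ℕ, 1 ≤ n → ∀ d ∈ A n, d ∣ n) ∧
      (∀ m n : ℕ, 1 ≤ m → 1 ≤ n → Nat.Coprime m n → A (m * n) = A m * A n) ∧
      (∀ n : ℕ, 1 ≤ n → n ∈ A n) ∧
      (∀ ν : ℕ, ν ∈ Set.range (fun j => nseq (j + 1)) →
        A (2 ^ ν) = (Finset.range (ν + 1)).image (fun δ => 2 ^ δ)) ∧
      (∀ ν : ℕ, ν ∉ Set.range (fun j => nseq (j + 1)) → A (2 ^ ν) = {2 ^ ν}) ∧
      (∀ n : ℕ, 1 ≤ n → ∑ d ∈ A n, φ d = n) ∧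
      φ 1 = 1 ∧
      (∀ m n : ℕ, 1 ≤ m → 1 ≤ n → Nat.Coprime m n → φ (m * n) = φ m * φ n) ∧
      (∀ n : ℕ, 1 ≤ n → 1 ≤ φ n ∧ φ n ≤ n) ∧
      (∀ ν : ℕ, ν ∉ Set.range (fun j => nseq (j + 1)) → φ (2 ^ ν) = 2 ^ ν) ∧
      (∀ j : ℕ, φ (2 ^ nseq (j + 1)) = 2 ^ nseq j) ∧
      ¬ BddAbove (Set.range fun ν : ℕ => (2 : ℝ) ^ ν / φ (2 ^ ν)) := by
  classical
  refine ⟨A nseq, φ nseq, ?_, ?_, ?_, ?_, ?_, ?_, ?_, ?_, ?_, ?_, ?_, ?_⟩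
  · -- divisors
    intro n hn d hd
    obtain ⟨ν, m, hm, rfl⟩ := decomp (by omega : n ≠ 0)
    rw [A_two_pow_mul hm, Finset.mem_image] at hd
    obtain ⟨s, hs, rfl⟩ := hd
    obtain ⟨δ, hδ, rfl⟩ := S_mem_pow hs
    exact mul_dvd_mul (pow_dvd_pow 2 hδ) dvd_rfl
  · -- multiplicativity of A
    intro m n hm hn hcop
    obtain ⟨a, m', hm', rfl⟩ := decomp (by omega : m ≠ 0)
    obtain ⟨b, n', hn', rfl⟩ := decomp (by omega : n ≠ 0)
    have hab : a = 0 ∨ b = 0 := by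
      by_contra hc
      push_neg at hc
      have h1 : 2 ∣ 2 ^ a * m' := Dvd.dvd.mul_right (dvd_pow_self 2 hc.1) m'
      have h2 : 2 ∣ 2 ^ b * n' := Dvd.dvd.mul_right (dvd_pow_self 2 hc.2) n'
      have h3 : (2:ℕ) ∣ 1 := hcop ▸ Nat.dvd_gcd h1 h2
      omega
    rcases hab with rfl | rfl
    · -- m odd
      rw [pow_zero, one_mul] at *
      have hmn : ¬ 2 ∣ (m' * n') := fun h => by
        rcases (Nat.prime_two.dvd_mul.1 h) with h | h
        · exact hm' h
        · exact hn' h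
      have hrw : m' * (2 ^ b * n') = 2 ^ b * (m' * n') := by ring
      rw [hrw, A_two_pow_mul hmn, A_odd h0 hmono hm', A_two_pow_mul hn']
      ext x
      simp only [Finset.mem_mul, Finset.mem_image, Finset.mem_singleton]
      constructor
      · rintro ⟨s, hs, rfl⟩
        exact ⟨m', rfl, s * n', ⟨s, hs, rfl⟩, by ring⟩
      · rintro ⟨y, rfl, z, ⟨s, hs, rfl⟩, rfl⟩
        exact ⟨s, hs, by ring⟩
    · -- n odd
      rw [pow_zero, one_mul] at *
      have hmn : ¬ 2 ∣ (m' * n') := fun h => by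
        rcases (Nat.prime_two.dvd_mul.1 h) with h | h
        · exact hm' h
        · exact hn' h
      have hrw : 2 ^ a * m' * n' = 2 ^ a * (m' * n') := by ring
      rw [hrw, A_two_pow_mul hmn, A_odd h0 hmono hn', A_two_pow_mul hm']
      ext x
      simp only [Finset.mem_mul, Finset.mem_image, Finset.mem_singleton]
      constructor
      · rintro ⟨s, hs, rfl⟩
        exact ⟨s * m', ⟨s, hs, rfl⟩, n', rfl, by ring⟩
      · rintro ⟨y, ⟨s, hs, rfl⟩, z, rfl, rfl⟩
        exact ⟨s, hs, by ring⟩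
  · -- n ∈ A n
    intro n hn
    obtain ⟨ν, m, hm, rfl⟩ := decomp (by omega : n ≠ 0)
    rw [A_two_pow_mul hm, Finset.mem_image]
    exact ⟨2 ^ ν, pow_self_mem_S ν, rfl⟩
  · -- A at members of N
    intro ν hν
    simp only [Set.mem_range] at hν
    rw [A_pow, S, if_pos hν]
  · -- A outside N
    intro ν hν
    simp only [Set.mem_range] at hν
    rw [A_pow, S, if_neg hν]
  · -- sum identity
    intro n hn
    obtain ⟨ν, m, hm, rfl⟩ := decomp (by omega : n ≠ 0)
    have hm0 : m ≠ 0 := by rintro rfl; exact hm ⟨0, rfl⟩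
    rw [A_two_pow_mul hm,
      Finset.sum_image (fun x _ y _ h => Nat.eq_of_mul_eq_mul_right (by omega) h)]
    rw [S]
    split_ifs with hN
    · obtain ⟨j, rfl⟩ := hN
      rw [Finset.sum_image (fun x _ y _ h => Nat.pow_right_injective (le_refl 2) h)]
      have : ∀ δ ∈ Finset.range (nseq (j + 1) + 1),
          φ nseq (2 ^ δ * m) = f nseq δ * (m : ℝ) := fun δ _ => φ_two_pow_mul hm
      rw [Finset.sum_congr rfl this, ← Finset.sum_mul, sum_f h0 hmono]
      push_cast
      ring
    · rw [Finset.sum_singleton, φ_two_pow_mul hm, f_not_mem hN]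
      push_cast
      ring
  · -- φ 1 = 1
    have h := φ_odd (nseq := nseq) h0 hmono (n := 1) (by norm_num)
    simpa using h
  · -- φ multiplicative
    intro m n hm hn hcop
    obtain ⟨a, m', hm', rfl⟩ := decomp (by omega : m ≠ 0)
    obtain ⟨b, n', hn', rfl⟩ := decomp (by omega : n ≠ 0)
    have hab : a = 0 ∨ b = 0 := by
      by_contra hc
      push_neg at hc
      have h1 : 2 ∣ 2 ^ a * m' := Dvd.dvd.mul_right (dvd_pow_self 2 hc.1) m'
      have h2 : 2 ∣ 2 ^ b * n' := Dvd.dvd.mul_right (dvd_pow_self 2 hc.2) n'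
      have h3 : (2:ℕ) ∣ 1 := hcop ▸ Nat.dvd_gcd h1 h2
      omega
    rcases hab with rfl | rfl
    · rw [pow_zero, one_mul] at *
      have hmn : ¬ 2 ∣ (m' * n') := fun h => by
        rcases (Nat.prime_two.dvd_mul.1 h) with h | h
        · exact hm' h
        · exact hn' h
      have hrw : m' * (2 ^ b * n') = 2 ^ b * (m' * n') := by ring
      rw [hrw, φ_two_pow_mul hmn, φ_odd h0 hmono hm', φ_two_pow_mul hn']
      push_cast
      ring
    · rw [pow_zero, one_mul] at *
      have hmn : ¬ 2 ∣ (m' * n') := fun h => by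
        rcases (Nat.prime_two.dvd_mul.1 h) with h | h
        · exact hm' h
        · exact hn' h
      have hrw : 2 ^ a * m' * n' = 2 ^ a * (m' * n') := by ring
      rw [hrw, φ_two_pow_mul hmn, φ_odd h0 hmono hn', φ_two_pow_mul hm']
      push_cast
      ring
  · -- bounds
    intro n hn
    obtain ⟨ν, m, hm, rfl⟩ := decomp (by omega : n ≠ 0)
    have hm0 : (1 : ℝ) ≤ (m : ℝ) := by
      have : m ≠ 0 := by rintro rfl; exact hm ⟨0, rfl⟩
      exact_mod_cast Nat.one_le_iff_ne_zero.2 this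
    rw [φ_two_pow_mul hm]
    constructor
    · calc (1:ℝ) = 1 * 1 := by ring
        _ ≤ f nseq ν * m := by
            exact mul_le_mul (f_one_le h0 hmono ν) hm0 (by norm_num)
              ((f_one_le h0 hmono ν).trans' zero_le_one)
    · calc f nseq ν * (m : ℝ) ≤ 2 ^ ν * m :=
            mul_le_mul_of_nonneg_right (f_le h0 hmono ν) (by positivity)
        _ = ((2 ^ ν * m : ℕ) : ℝ) := by push_cast; ring
  · -- φ outside N
    intro ν hν
    simp only [Set.mem_range] at hν
    rw [φ_pow, f_not_mem hν]
  · -- φ at members of N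
    intro j
    rw [φ_pow, f_mem hmono]
  · -- unboundedness
    rintro ⟨B, hB⟩
    simp only [mem_upperBounds, Set.mem_range, forall_exists_index] at hB
    set C := ⌈B⌉₊ + 1 with hC
    obtain ⟨j, hj⟩ := hgap C
    have hab : nseq j < nseq (j + 1) := hmono (Nat.lt_succ_self j)
    set g := nseq (j + 1) - nseq j with hg
    have key := hB ((2:ℝ) ^ nseq (j+1) / φ nseq (2 ^ nseq (j+1))) (nseq (j+1)) rfl
    rw [φ_pow, f_mem hmono] at key
    have hpow : (2:ℝ) ^ nseq (j+1) = 2 ^ g * 2 ^ nseq j := by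
      rw [← pow_add]
      congr 1
      omega
    have h2 : (0:ℝ) < 2 ^ nseq j := by positivity
    rw [hpow, mul_div_assoc, div_self (ne_of_gt h2), mul_one] at key
    have hlt : (B : ℝ) < 2 ^ g := by
      have h3 : ⌈B⌉₊ < 2 ^ g := by
        have : g < 2 ^ g := Nat.lt_two_pow_self (n := g)
        omega
      calc B ≤ (⌈B⌉₊ : ℝ) := Nat.le_ceil B
        _ < ((2 ^ g : ℕ) : ℝ) := by exact_mod_cast h3
        _ = 2 ^ g := by push_cast; ring
    exact absurd key (not_le.2 hlt)
end
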